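/- (Strict positivity of the SFT loss increase.) In the setting of the SFT-then-RL coupling theorem, if there exists a prompt x with q(x) > 0 and responses y, y' ∈ Y such that p_SFT(y | x) > 0, p_SFT(y' | x) > 0, and r(x, y) ≠ r(x, y'), then the constant C₁(β) = ∑_x q(x) · ( log Z(x) − (1/β) ∑_y p_SFT(y | x) · r(x,y) ) is strictly positive, so the SFT loss strictly increases after the RL phase: L(p_RL) > L(p_SFT). -/

import Mathlib

/-!
Jensen's inequality for the strictly convex `exp` gives `log Z(x) ≥ 𝔼_{p_SFT(·|x)}[r(x,·)] / β`,
strictly when `r(x,·)` is not constant, so every summand of `C₁` is nonnegative and the one at the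
given prompt is positive. Since `-log p_RL = -log p_SFT + log Z - r / β`, the loss increase
`L(p_RL) - L(p_SFT)` is exactly `C₁`.
-/

open Real Finset

section Jensen

variable {ι : Type*} {s : Finset ι} {w f : ι → ℝ}

theorem exp_sum_mul_le_sum_mul_exp (hw : ∀ i ∈ s, 0 ≤ w i) (hw₁ : ∑ i ∈ s, w i = 1) :
    exp (∑ i ∈ s, w i * f i) ≤ ∑ i ∈ s, w i * exp (f i) := by
  simpa only [smul_eq_mul] using convexOn_exp.map_sum_le hw hw₁ fun i _ => Set.mem_univ (f i)

theorem exp_sum_mul_lt_sum_mul_exp (hw : ∀ i ∈ s, 0 < w i) (hw₁ : ∑ i ∈ s, w i = 1)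
    (hf : ∃ i ∈ s, ∃ j ∈ s, f i ≠ f j) :
    exp (∑ i ∈ s, w i * f i) < ∑ i ∈ s, w i * exp (f i) := by
  simpa only [smul_eq_mul] using
    strictConvexOn_exp.map_sum_lt hw hw₁ (fun i _ => Set.mem_univ (f i)) hf

theorem sum_mul_exp_pos (hw : ∀ i ∈ s, 0 ≤ w i) (hw₁ : ∑ i ∈ s, w i = 1) :
    0 < ∑ i ∈ s, w i * exp (f i) :=
  (exp_pos _).trans_le (exp_sum_mul_le_sum_mul_exp hw hw₁)

theorem sum_mul_le_log_sum_mul_exp (hw : ∀ i ∈ s, 0 ≤ w i) (hw₁ : ∑ i ∈ s, w i = 1) :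
    ∑ i ∈ s, w i * f i ≤ log (∑ i ∈ s, w i * exp (f i)) :=
  (le_log_iff_exp_le (sum_mul_exp_pos hw hw₁)).2 (exp_sum_mul_le_sum_mul_exp hw hw₁)

theorem sum_mul_lt_log_sum_mul_exp (hw : ∀ i ∈ s, 0 < w i) (hw₁ : ∑ i ∈ s, w i = 1)
    (hf : ∃ i ∈ s, ∃ j ∈ s, f i ≠ f j) :
    ∑ i ∈ s, w i * f i < log (∑ i ∈ s, w i * exp (f i)) :=
  (lt_log_iff_exp_lt (sum_mul_exp_pos (fun i hi => (hw i hi).le) hw₁)).2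
    (exp_sum_mul_lt_sum_mul_exp hw hw₁ hf)

end Jensen

theorem mul_neg_log_mul_exp_div {Z : ℝ} (hZ : Z ≠ 0) (a b : ℝ) :
    a * -log (a * exp b / Z) = a * -log a + a * (log Z - b) := by
  rcases eq_or_ne a 0 with rfl | ha
  · simp
  · rw [log_div (mul_ne_zero ha (exp_pos b).ne') hZ, log_mul ha (exp_pos b).ne', log_exp]
    ring

theorem sum_mul_neg_log_mul_exp_div {ι : Type*} {s : Finset ι} {w : ι → ℝ}
    (hw₁ : ∑ i ∈ s, w i = 1) {Z : ℝ} (hZ : Z ≠ 0) (f : ι → ℝ) :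
    ∑ i ∈ s, w i * -log (w i * exp (f i) / Z)
      = ∑ i ∈ s, w i * -log (w i) + (log Z - ∑ i ∈ s, w i * f i) := by
  simp only [mul_neg_log_mul_exp_div hZ, sum_add_distrib, mul_sub, sum_sub_distrib, ← sum_mul,
    hw₁, one_mul]

theorem sft_then_rl_strict_general {X Y : Type*} [Fintype X] [Fintype Y]
    (q : X → ℝ) (hq : ∀ x, 0 ≤ q x)
    (pSFT : X → Y → ℝ) (hp : ∀ x y, 0 < pSFT x y)
    (hpsum : ∀ x, ∑ y, pSFT x y = 1)
    (r : X → Y → ℝ) (β : ℝ) (hβ : 0 < β)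
    (Z : X → ℝ) (hZ : ∀ x, Z x = ∑ y, pSFT x y * Real.exp (r x y / β))
    (pRL : X → Y → ℝ)
    (hpRL : ∀ x y, pRL x y = pSFT x y * Real.exp (r x y / β) / Z x)
    (L : (X → Y → ℝ) → ℝ)
    (hL : ∀ p, L p = ∑ x, q x * ∑ y, pSFT x y * (-Real.log (p x y)))
    (C₁ : ℝ)
    (hC₁ : C₁ = ∑ x, q x * (Real.log (Z x) - (1 / β) * ∑ y, pSFT x y * r x y))
    (hexists : ∃ x y y', 0 < q x ∧ 0 < pSFT x y ∧ 0 < pSFT x y' ∧ r x y ≠ r x y') :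
    0 < C₁ ∧ L pSFT < L pRL := by
  have hp₀ : ∀ x, ∀ y ∈ univ, 0 ≤ pSFT x y := fun x y _ => (hp x y).le
  have hmean : ∀ x, (1 / β) * ∑ y, pSFT x y * r x y = ∑ y, pSFT x y * (r x y / β) := fun x => by
    rw [mul_sum]
    exact sum_congr rfl fun y _ => by ring
  have hgap : ∀ x, 0 ≤ log (Z x) - (1 / β) * ∑ y, pSFT x y * r x y := fun x => by
    rw [hmean, hZ, sub_nonneg]
    exact sum_mul_le_log_sum_mul_exp (hp₀ x) (hpsum x)
  obtain ⟨x₀, y, y', hqx₀, -, -, hr⟩ := hexists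
  have hgap₀ : 0 < log (Z x₀) - (1 / β) * ∑ y, pSFT x₀ y * r x₀ y := by
    rw [hmean, hZ, sub_pos]
    refine sum_mul_lt_log_sum_mul_exp (fun y _ => hp x₀ y) (hpsum x₀)
      ⟨y, mem_univ _, y', mem_univ _, fun h => hr ?_⟩
    rwa [div_left_inj' hβ.ne'] at h
  have hC₁_pos : 0 < C₁ := hC₁ ▸ sum_pos' (fun x _ => mul_nonneg (hq x) (hgap x))
    ⟨x₀, mem_univ _, mul_pos hqx₀ hgap₀⟩
  have hZ₀ : ∀ x, Z x ≠ 0 := fun x => (hZ x ▸ sum_mul_exp_pos (hp₀ x) (hpsum x)).ne'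
  have hloss : L pRL = L pSFT + C₁ := by
    simp only [hL, hC₁, hpRL, sum_mul_neg_log_mul_exp_div (hpsum _) (hZ₀ _), hmean, mul_add,
      sum_add_distrib]
  exact ⟨hC₁_pos, by linarith⟩

/-- strict positivity of the SFT loss increase: if some prompt `x` with
`q(x) > 0` admits responses `y, y'` with positive SFT probability and different rewards,
then `C₁(β) > 0` and the SFT loss strictly increases after the RL phase. -/
theorem sft_then_rl_strict {X Y : Type*} [Fintype X] [Fintype Y]
    [Nonempty X] [Nonempty Y]
    (q : X → ℝ) (hq : ∀ x, 0 ≤ q x) (hqsum : ∑ x, q x = 1)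
    (pSFT : X → Y → ℝ) (hp : ∀ x y, 0 < pSFT x y)
    (hpsum : ∀ x, ∑ y, pSFT x y = 1)
    (r : X → Y → ℝ) (β : ℝ) (hβ : 0 < β)
    (Z : X → ℝ) (hZ : ∀ x, Z x = ∑ y, pSFT x y * Real.exp (r x y / β))
    (pRL : X → Y → ℝ)
    (hpRL : ∀ x y, pRL x y = pSFT x y * Real.exp (r x y / β) / Z x)
    (L : (X → Y → ℝ) → ℝ)
    (hL : ∀ p, L p = ∑ x, q x * ∑ y, pSFT x y * (-Real.log (p x y)))
    (C₁ : ℝ)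
    (hC₁ : C₁ = ∑ x, q x * (Real.log (Z x) - (1 / β) * ∑ y, pSFT x y * r x y))
    (hexists : ∃ x y y', 0 < q x ∧ 0 < pSFT x y ∧ 0 < pSFT x y' ∧ r x y ≠ r x y') :
    0 < C₁ ∧ L pSFT < L pRL :=
  sft_then_rl_strict_general q hq pSFT hp hpsum r β hβ Z hZ pRL hpRL L hL C₁ hC₁ hexists
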